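/- Let X be a real Banach space with a partial order ≼ that is translation invariant, invariant under multiplication by nonnegative scalars, has norm-closed positive cone, and is regular (every ≼-increasing sequence with a ≼-upper bound is norm-convergent). Let D ⊆ X be a nonempty norm-closed inductive subset, and let T : D → 2^D \ {∅} be a set-valued mapping such that: (1) T is order-increasing upward (x ≼ y in D implies for every z ∈ Tx there is w ∈ Ty with z ≼ w); (2) for every x ∈ D the set Tx is universally inductive in D; (3) there exist x₀ ∈ D and x₁ ∈ Tx₀ with x₀ ≼ x₁. Then the fixed point set F(T) = {x ∈ D : x ∈ Tx} is a nonempty inductive subset of D, and F(T) ∩ [x₀) = {x ∈ F(T) : x₀ ≼ x} is also a nonempty inductive subset of D. -/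

import Mathlib

/-!
In a regular ordered Banach space a chain `C` that is bounded above is Cauchy as a net: otherwise
one could pick an increasing, bounded sequence in `C` with steps of length at least some `ε > 0`.
Its limit is the supremum of `C` (the order is closed), and it lies in `D` when `C ⊆ D` and `D` is
closed. With suprema of chains available, Zorn's lemma applied to `{x ∈ D | x₀ ≤ x, x ≤ y for some
y ∈ T x}` yields a maximal element `m`; an element `y ∈ T m` above `m` lies in the same set, so
`y = m` is a fixed point. A chain of fixed points is bounded by a point `a ∈ T (sup C)` chosen by
universal inductivity, and the same argument started at `a` gives a fixed point above the chain.
-/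

open Filter Topology Set

section SetValued

variable {X : Type*} [PartialOrder X]

def UpwardMonotoneOn (T : X → Set X) (D : Set X) : Prop :=
  ∀ x ∈ D, ∀ y ∈ D, x ≤ y → ∀ z ∈ T x, ∃ w ∈ T y, z ≤ w

def UniversallyInductiveIn (A D : Set X) : Prop :=
  ∀ C ⊆ D, C.Nonempty → IsChain (· ≤ ·) C → (∀ c ∈ C, ∃ a ∈ A, c ≤ a) → ∃ a ∈ A, ∀ c ∈ C, c ≤ a

variable {D C : Set X} {T : X → Set X}

theorem IsChain.exists_upperBound_le_mem_image
    (hlub : ∀ C ⊆ D, C.Nonempty → IsChain (· ≤ ·) C → ∃ u ∈ D, IsLUB C u)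
    (hTD : ∀ x ∈ D, T x ⊆ D) (hmono : UpwardMonotoneOn T D)
    (huniv : ∀ x ∈ D, UniversallyInductiveIn (T x) D)
    (hchain : IsChain (· ≤ ·) C) (hCD : C ⊆ D) (hne : C.Nonempty)
    (hCT : ∀ c ∈ C, ∃ y ∈ T c, c ≤ y) :
    ∃ a ∈ D, (∃ w ∈ T a, a ≤ w) ∧ ∀ c ∈ C, c ≤ a := by
  obtain ⟨u, huD, hu⟩ := hlub C hCD hne hchain
  have hCTu : ∀ c ∈ C, ∃ a ∈ T u, c ≤ a := fun c hc => by
    obtain ⟨y, hyT, hcy⟩ := hCT c hc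
    obtain ⟨w, hwT, hyw⟩ := hmono c (hCD hc) u huD (hu.1 hc) y hyT
    exact ⟨w, hwT, hcy.trans hyw⟩
  obtain ⟨a, haT, ha⟩ := huniv u huD C hCD hne hchain hCTu
  have haD : a ∈ D := hTD u huD haT
  exact ⟨a, haD, hmono u huD a haD (hu.2 ha) a haT, ha⟩

theorem exists_fixedPoint_ge
    (hlub : ∀ C ⊆ D, C.Nonempty → IsChain (· ≤ ·) C → ∃ u ∈ D, IsLUB C u)
    (hTD : ∀ x ∈ D, T x ⊆ D) (hmono : UpwardMonotoneOn T D)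
    (huniv : ∀ x ∈ D, UniversallyInductiveIn (T x) D)
    {s : X} (hs : s ∈ D) (hsT : ∃ y ∈ T s, s ≤ y) :
    ∃ m ∈ D, m ∈ T m ∧ s ≤ m := by
  let E : Set X := {x | x ∈ D ∧ s ≤ x ∧ ∃ y ∈ T x, x ≤ y}
  have hEind : ∀ C ⊆ E, IsChain (· ≤ ·) C → ∀ c ∈ C, ∃ ub ∈ E, ∀ z ∈ C, z ≤ ub := by
    intro C hCE hchain c hc
    obtain ⟨a, haD, haT, ha⟩ := hchain.exists_upperBound_le_mem_image hlub hTD hmono huniv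
      (fun x hx => (hCE hx).1) ⟨c, hc⟩ (fun x hx => (hCE hx).2.2)
    exact ⟨a, ⟨haD, (hCE hc).2.1.trans (ha c hc), haT⟩, ha⟩
  obtain ⟨m, -, ⟨hmD, hsm, y, hyT, hmy⟩, hmax⟩ := zorn_le_nonempty₀ E hEind s ⟨hs, le_rfl, hsT⟩
  have hyD : y ∈ D := hTD m hmD hyT
  have hyE : y ∈ E := ⟨hyD, hsm.trans hmy, hmono m hmD y hyD hmy y hyT⟩
  obtain rfl : y = m := le_antisymm (hmax hyE hmy) hmy
  exact ⟨y, hyD, hyT, hsm⟩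

theorem IsChain.exists_fixedPoint_upperBound
    (hlub : ∀ C ⊆ D, C.Nonempty → IsChain (· ≤ ·) C → ∃ u ∈ D, IsLUB C u)
    (hTD : ∀ x ∈ D, T x ⊆ D) (hmono : UpwardMonotoneOn T D)
    (huniv : ∀ x ∈ D, UniversallyInductiveIn (T x) D)
    (hchain : IsChain (· ≤ ·) C) (hCF : C ⊆ {x ∈ D | x ∈ T x}) (hne : C.Nonempty) :
    ∃ m ∈ {x ∈ D | x ∈ T x}, ∀ c ∈ C, c ≤ m := by
  obtain ⟨a, haD, haT, ha⟩ := hchain.exists_upperBound_le_mem_image hlub hTD hmono huniv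
    (fun c hc => (hCF hc).1) hne (fun c hc => ⟨c, (hCF hc).2, le_rfl⟩)
  obtain ⟨m, hmD, hmT, ham⟩ := exists_fixedPoint_ge hlub hTD hmono huniv haD haT
  exact ⟨m, ⟨hmD, hmT⟩, fun c hc => (ha c hc).trans ham⟩

end SetValued

section ChainSupremum

variable {X : Type*} [PseudoMetricSpace X]

theorem exists_forall_ge_dist_lt_of_bddAbove [Preorder X]
    (hreg : ∀ x : ℕ → X, (∀ n, x n ≤ x (n + 1)) → (∃ b : X, ∀ n, x n ≤ b) →
      ∃ l : X, Tendsto x atTop (𝓝 l))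
    {C : Set X} (hne : C.Nonempty) (hbdd : BddAbove C) {ε : ℝ} (hε : 0 < ε) :
    ∃ c ∈ C, ∀ x ∈ C, c ≤ x → dist c x < ε := by
  by_contra! hfar
  choose! next hnextC hle hdist using hfar
  obtain ⟨c₀, hc₀⟩ := hne
  let x : ℕ → X := fun n => next^[n] c₀
  have hstep : ∀ n, x (n + 1) = next (x n) := fun n => Function.iterate_succ_apply' next n c₀
  have hxC : ∀ n, x n ∈ C := fun n => by
    induction n with
    | zero => exact hc₀
    | succ n ih => rw [hstep]; exact hnextC _ ih
  obtain ⟨b, hb⟩ := hbdd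
  obtain ⟨l, hl⟩ := hreg x (fun n => hstep n ▸ hle _ (hxC n)) ⟨b, fun n => hb (hxC n)⟩
  have hsteps : Tendsto (fun n => dist (x n) (x (n + 1))) atTop (𝓝 0) := by
    simpa using hl.dist (hl.comp (tendsto_add_atTop_nat 1))
  obtain ⟨n, hn⟩ := (hsteps.eventually (gt_mem_nhds hε)).exists
  exact (hdist _ (hxC n)).not_gt (hstep n ▸ hn)

theorem IsChain.exists_isLUB_mem_closure [CompleteSpace X] [PartialOrder X]
    [OrderClosedTopology X]
    (hreg : ∀ x : ℕ → X, (∀ n, x n ≤ x (n + 1)) → (∃ b : X, ∀ n, x n ≤ b) →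
      ∃ l : X, Tendsto x atTop (𝓝 l))
    {C : Set X} (hchain : IsChain (· ≤ ·) C) (hne : C.Nonempty) (hbdd : BddAbove C) :
    ∃ u ∈ closure C, IsLUB C u := by
  have : Nonempty C := hne.to_subtype
  have : IsDirectedOrder C := hchain.directedOn.isDirectedOrder
  have hcauchy : CauchySeq (Subtype.val : C → X) := by
    refine Metric.cauchy_iff.2 ⟨inferInstance, fun ε hε => ?_⟩
    obtain ⟨c, hc, hcε⟩ := exists_forall_ge_dist_lt_of_bddAbove hreg hne hbdd (half_pos hε)
    refine ⟨Subtype.val '' Ici ⟨c, hc⟩, image_mem_map (Ici_mem_atTop _), ?_⟩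
    rintro _ ⟨x, hx, rfl⟩ _ ⟨y, hy, rfl⟩
    calc dist x.1 y.1 ≤ dist c x + dist c y := dist_triangle_left _ _ _
      _ < ε / 2 + ε / 2 := add_lt_add (hcε _ x.2 hx) (hcε _ y.2 hy)
      _ = ε := add_halves ε
  obtain ⟨u, hu⟩ := cauchySeq_tendsto_of_complete hcauchy
  refine ⟨u, mem_closure_of_tendsto hu (Eventually.of_forall fun x => x.2),
    fun c hc => ge_of_tendsto hu ?_, fun a ha => le_of_tendsto' hu fun x => ha x.2⟩
  exact (eventually_ge_atTop ⟨c, hc⟩).mono fun _ h => h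

end ChainSupremum

theorem fixedPoints_nonempty_inductive_setValued_general {X : Type*} [NormedAddCommGroup X]
    [CompleteSpace X] [PartialOrder X]
    (hadd : ∀ x y z : X, x ≤ y → x + z ≤ y + z)
    (hcone : IsClosed {x : X | 0 ≤ x})
    (hreg : ∀ x : ℕ → X, (∀ n, x n ≤ x (n + 1)) → (∃ b : X, ∀ n, x n ≤ b) →
      ∃ l : X, Filter.Tendsto x Filter.atTop (nhds l))
    (D : Set X) (hclosed : IsClosed D)
    (hind : ∀ C : Set X, C ⊆ D → C.Nonempty → IsChain (· ≤ ·) C →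
      ∃ b ∈ D, ∀ c ∈ C, c ≤ b)
    (T : X → Set X)
    (hTD : ∀ x ∈ D, T x ⊆ D)
    (hmono : ∀ x ∈ D, ∀ y ∈ D, x ≤ y → ∀ z ∈ T x, ∃ w ∈ T y, z ≤ w)
    (huniv : ∀ x ∈ D, ∀ C : Set X, C ⊆ D → C.Nonempty → IsChain (· ≤ ·) C →
      (∀ c ∈ C, ∃ a ∈ T x, c ≤ a) → ∃ a ∈ T x, ∀ c ∈ C, c ≤ a)
    (x₀ x₁ : X) (hx₀ : x₀ ∈ D) (hx₁ : x₁ ∈ T x₀) (h₀₁ : x₀ ≤ x₁) :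
    ({x ∈ D | x ∈ T x}).Nonempty ∧
    (∀ C : Set X, C ⊆ {x ∈ D | x ∈ T x} → C.Nonempty → IsChain (· ≤ ·) C →
      ∃ b ∈ {x ∈ D | x ∈ T x}, ∀ c ∈ C, c ≤ b) ∧
    ({x ∈ D | x ∈ T x ∧ x₀ ≤ x}).Nonempty ∧
    (∀ C : Set X, C ⊆ {x ∈ D | x ∈ T x ∧ x₀ ≤ x} → C.Nonempty → IsChain (· ≤ ·) C →
      ∃ b ∈ {x ∈ D | x ∈ T x ∧ x₀ ≤ x}, ∀ c ∈ C, c ≤ b) := by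
  have : IsOrderedAddMonoid X := { add_le_add_left := fun a b h c => hadd a b c h }
  have : OrderClosedTopology X := ⟨isClosed_le_of_isClosed_nonneg hcone⟩
  have hlub : ∀ C ⊆ D, C.Nonempty → IsChain (· ≤ ·) C → ∃ u ∈ D, IsLUB C u := by
    intro C hCD hne hchain
    obtain ⟨b, -, hb⟩ := hind C hCD hne hchain
    obtain ⟨u, hu, hCu⟩ := hchain.exists_isLUB_mem_closure hreg hne ⟨b, hb⟩
    exact ⟨u, hclosed.closure_subset_iff.2 hCD hu, hCu⟩
  have hFix : ∀ C : Set X, C ⊆ {x ∈ D | x ∈ T x} → C.Nonempty → IsChain (· ≤ ·) C →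
      ∃ b ∈ {x ∈ D | x ∈ T x}, ∀ c ∈ C, c ≤ b := fun C hCF hne hchain =>
    hchain.exists_fixedPoint_upperBound hlub hTD hmono huniv hCF hne
  obtain ⟨m, hmD, hmT, hm⟩ := exists_fixedPoint_ge hlub hTD hmono huniv hx₀ ⟨x₁, hx₁, h₀₁⟩
  refine ⟨⟨m, hmD, hmT⟩, hFix, ⟨m, hmD, hmT, hm⟩, fun C hCF hne hchain => ?_⟩
  obtain ⟨b, ⟨hbD, hbT⟩, hb⟩ := hFix C (fun c hc => ⟨(hCF hc).1, (hCF hc).2.1⟩) hne hchain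
  obtain ⟨c, hc⟩ := hne
  exact ⟨b, ⟨hbD, hbT, (hCF hc).2.2.trans (hb c hc)⟩, hb⟩

/-- Fixed point theorem for isotone set-valued maps with universally inductive values on a
closed inductive subset of a regular partially ordered Banach space: the fixed point set
`F(T)` and `F(T) ∩ [x₀)` are nonempty inductive posets. -/
theorem fixedPoints_nonempty_inductive_setValued {X : Type*} [NormedAddCommGroup X]
    [NormedSpace ℝ X] [CompleteSpace X] [PartialOrder X]
    (hadd : ∀ x y z : X, x ≤ y → x + z ≤ y + z)
    (hsmul : ∀ α : ℝ, 0 ≤ α → ∀ x y : X, x ≤ y → α • x ≤ α • y)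
    (hcone : IsClosed {x : X | 0 ≤ x})
    (hreg : ∀ x : ℕ → X, (∀ n, x n ≤ x (n + 1)) → (∃ b : X, ∀ n, x n ≤ b) →
      ∃ l : X, Filter.Tendsto x Filter.atTop (nhds l))
    (D : Set X) (hD : D.Nonempty) (hclosed : IsClosed D)
    (hind : ∀ C : Set X, C ⊆ D → C.Nonempty → IsChain (· ≤ ·) C →
      ∃ b ∈ D, ∀ c ∈ C, c ≤ b)
    (T : X → Set X)
    (hTne : ∀ x ∈ D, (T x).Nonempty) (hTD : ∀ x ∈ D, T x ⊆ D)
    (hmono : ∀ x ∈ D, ∀ y ∈ D, x ≤ y → ∀ z ∈ T x, ∃ w ∈ T y, z ≤ w)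
    (huniv : ∀ x ∈ D, ∀ C : Set X, C ⊆ D → C.Nonempty → IsChain (· ≤ ·) C →
      (∀ c ∈ C, ∃ a ∈ T x, c ≤ a) → ∃ a ∈ T x, ∀ c ∈ C, c ≤ a)
    (x₀ x₁ : X) (hx₀ : x₀ ∈ D) (hx₁ : x₁ ∈ T x₀) (h₀₁ : x₀ ≤ x₁) :
    ({x ∈ D | x ∈ T x}).Nonempty ∧
    (∀ C : Set X, C ⊆ {x ∈ D | x ∈ T x} → C.Nonempty → IsChain (· ≤ ·) C →
      ∃ b ∈ {x ∈ D | x ∈ T x}, ∀ c ∈ C, c ≤ b) ∧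
    ({x ∈ D | x ∈ T x ∧ x₀ ≤ x}).Nonempty ∧
    (∀ C : Set X, C ⊆ {x ∈ D | x ∈ T x ∧ x₀ ≤ x} → C.Nonempty → IsChain (· ≤ ·) C →
      ∃ b ∈ {x ∈ D | x ∈ T x ∧ x₀ ≤ x}, ∀ c ∈ C, c ≤ b) :=
  fixedPoints_nonempty_inductive_setValued_general hadd hcone hreg D hclosed hind T hTD hmono huniv
    x₀ x₁ hx₀ hx₁ h₀₁
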